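/- arXiv:1406.7868 — 2 statements merged into one kernel-verified Lean document; each statement's English description precedes it below -/
import Mathlib

section
/- Let X be a pointed metric space, let F be a locally convex space and let T : Lip₀(X) → F be a linear map. Then T is continuous for the topology τ_γ if and only if the restriction of T to each norm-bounded subset B of Lip₀(X) is continuous for the topology induced by τ₀ on B. -/
open Filter Topology Set Pointwise

set_option linter.unusedSectionVars false
set_option linter.unusedVariables false

noncomputable section

namespace LipApprox

variable (X : Type*) [MetricSpace X] (x₀ : X)
variable (F : Type*) [NormedAddCommGroup F] [NormedSpace ℝ F]

/-- The Lipschitz maps `X → F` vanishing at the base point, as a submodule of `X → F`. -/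
def lip0Submodule : Submodule ℝ (X → F) where
  carrier := {f | (∃ K, LipschitzWith K f) ∧ f x₀ = 0}
  add_mem' := by
    rintro f g ⟨⟨Kf, hf⟩, hf0⟩ ⟨⟨Kg, hg⟩, hg0⟩
    exact ⟨⟨Kf + Kg, hf.add hg⟩, by simp [hf0, hg0]⟩
  zero_mem' := ⟨⟨0, LipschitzWith.const 0⟩, rfl⟩
  smul_mem' := by
    rintro c f ⟨⟨K, hf⟩, hf0⟩
    exact ⟨⟨‖c‖₊ * K, (lipschitzWith_smul c).comp hf⟩, by simp [hf0]⟩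

/-- The space `Lip₀(X, F)` of Lipschitz maps from `X` to `F` vanishing at the base point. -/
def lip0 : Type _ := ↥(lip0Submodule X x₀ F)

instance : AddCommGroup (lip0 X x₀ F) :=
  inferInstanceAs (AddCommGroup ↥(lip0Submodule X x₀ F))

instance : Module ℝ (lip0 X x₀ F) :=
  inferInstanceAs (Module ℝ ↥(lip0Submodule X x₀ F))

variable {X x₀ F}

/-- The underlying function of an element of `Lip₀(X, F)`. -/
def toFun' (f : lip0 X x₀ F) : X → F := f.1

lemma exists_lip (f : lip0 X x₀ F) : ∃ K, LipschitzWith K (toFun' f) := f.2.1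

lemma apply_base (f : lip0 X x₀ F) : toFun' f x₀ = 0 := f.2.2

lemma toFun'_add (f g : lip0 X x₀ F) : toFun' (f + g) = toFun' f + toFun' g := rfl
lemma toFun'_neg (f : lip0 X x₀ F) : toFun' (-f) = -toFun' f := rfl
lemma toFun'_smul (c : ℝ) (f : lip0 X x₀ F) : toFun' (c • f) = c • toFun' f := rfl
lemma toFun'_zero : toFun' (0 : lip0 X x₀ F) = 0 := rfl

variable (X x₀ F) in
/-- The Lipschitz norm of an element of `Lip₀(X, F)`. -/
def lipNorm (f : lip0 X x₀ F) : ℝ :=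
  ⨆ p : X × X, ‖toFun' f p.1 - toFun' f p.2‖ / dist p.1 p.2

lemma ratio_le (f : lip0 X x₀ F) {K : NNReal} (hK : LipschitzWith K (toFun' f))
    (p : X × X) : ‖toFun' f p.1 - toFun' f p.2‖ / dist p.1 p.2 ≤ K := by
  rcases eq_or_ne p.1 p.2 with h | h
  · simp [h]
  · rw [div_le_iff₀ (dist_pos.2 h), ← dist_eq_norm]
    exact hK.dist_le_mul p.1 p.2

lemma bddAbove_ratio (f : lip0 X x₀ F) :
    BddAbove (Set.range fun p : X × X =>
      ‖toFun' f p.1 - toFun' f p.2‖ / dist p.1 p.2) := by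
  obtain ⟨K, hK⟩ := exists_lip f
  exact ⟨K, by rintro r ⟨p, rfl⟩; exact ratio_le f hK p⟩

lemma nonempty_pairs (x₀ : X) : Nonempty (X × X) := ⟨(x₀, x₀)⟩

lemma ratio_le_lipNorm (f : lip0 X x₀ F) (p : X × X) :
    ‖toFun' f p.1 - toFun' f p.2‖ / dist p.1 p.2 ≤ lipNorm X x₀ F f :=
  le_ciSup (bddAbove_ratio f) p

lemma lipNorm_nonneg (f : lip0 X x₀ F) : 0 ≤ lipNorm X x₀ F f := by
  have := ratio_le_lipNorm (x₀ := x₀) f (x₀, x₀)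
  simpa using this

lemma norm_sub_le_lipNorm (f : lip0 X x₀ F) (x y : X) :
    ‖toFun' f x - toFun' f y‖ ≤ lipNorm X x₀ F f * dist x y := by
  rcases eq_or_ne x y with rfl | h
  · simp
  · have := ratio_le_lipNorm (x₀ := x₀) f (x, y)
    rw [div_le_iff₀ (dist_pos.2 h)] at this
    simpa using this

instance : NormedAddCommGroup (lip0 X x₀ F) :=
  AddGroupNorm.toNormedAddCommGroup
    { toFun := lipNorm X x₀ F
      map_zero' := by
        haveI : Nonempty (X × X) := nonempty_pairs x₀
        have h0 : ∀ p : X × X,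
            ‖toFun' (0 : lip0 X x₀ F) p.1 - toFun' (0 : lip0 X x₀ F) p.2‖ /
              dist p.1 p.2 = 0 := by
          intro p; rw [toFun'_zero]; simp
        simp only [lipNorm, h0, ciSup_const]
      add_le' := by
        intro f g
        haveI : Nonempty (X × X) := nonempty_pairs x₀
        apply ciSup_le
        intro p
        rcases eq_or_ne p.1 p.2 with h | h
        · simp only [h, dist_self, div_zero]
          exact add_nonneg (lipNorm_nonneg f) (lipNorm_nonneg g)
        · have hnum : ‖toFun' (f + g) p.1 - toFun' (f + g) p.2‖ ≤
              ‖toFun' f p.1 - toFun' f p.2‖ + ‖toFun' g p.1 - toFun' g p.2‖ := by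
            rw [toFun'_add, Pi.add_apply, Pi.add_apply, add_sub_add_comm]
            exact norm_add_le _ _
          calc ‖toFun' (f + g) p.1 - toFun' (f + g) p.2‖ / dist p.1 p.2
              ≤ (‖toFun' f p.1 - toFun' f p.2‖ +
                  ‖toFun' g p.1 - toFun' g p.2‖) / dist p.1 p.2 := by gcongr
            _ = ‖toFun' f p.1 - toFun' f p.2‖ / dist p.1 p.2 +
                  ‖toFun' g p.1 - toFun' g p.2‖ / dist p.1 p.2 := add_div _ _ _
            _ ≤ lipNorm X x₀ F f + lipNorm X x₀ F g :=
                add_le_add (ratio_le_lipNorm f p) (ratio_le_lipNorm g p)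
      neg' := by
        intro f
        simp only [lipNorm]
        congr 1
        funext p
        congr 1
        rw [toFun'_neg, Pi.neg_apply, Pi.neg_apply, neg_sub_neg, norm_sub_rev]
      eq_zero_of_map_eq_zero' := by
        intro f hf
        have hzero : ∀ x : X, toFun' f x = 0 := by
          intro x
          rcases eq_or_ne x x₀ with h | h
          · rw [h]; exact apply_base f
          · have hf' : lipNorm X x₀ F f = 0 := hf
            have h1 := ratio_le_lipNorm (x₀ := x₀) f (x, x₀)
            rw [hf', div_le_iff₀ (dist_pos.2 h), zero_mul] at h1
            have h2 : toFun' f x - toFun' f x₀ = 0 := by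
              simpa using norm_le_zero_iff.1 h1
            have h3 := apply_base f
            rw [h3, sub_zero] at h2
            exact h2
        exact Subtype.ext (funext hzero) }

lemma lip0_norm_def (f : lip0 X x₀ F) : ‖f‖ = lipNorm X x₀ F f := rfl

instance : NormedSpace ℝ (lip0 X x₀ F) where
  norm_smul_le c f := by
    haveI : Nonempty (X × X) := nonempty_pairs x₀
    rw [lip0_norm_def, lip0_norm_def, lipNorm]
    apply ciSup_le
    intro p
    have h1 : toFun' (c • f) p.1 - toFun' (c • f) p.2 =
        c • (toFun' f p.1 - toFun' f p.2) := by
      rw [toFun'_smul, Pi.smul_apply, Pi.smul_apply, smul_sub]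
    rw [h1, norm_smul]
    rcases eq_or_ne p.1 p.2 with h | h
    · simp only [h, dist_self, div_zero]
      exact mul_nonneg (norm_nonneg c) (lipNorm_nonneg f)
    · rw [mul_div_assoc]
      exact mul_le_mul_of_nonneg_left (ratio_le_lipNorm (x₀ := x₀) f p) (norm_nonneg c)

variable (X x₀ F)

/-- Elements of `Lip₀(X, F)` as continuous maps. -/
def toCM (f : lip0 X x₀ F) : C(X, F) :=
  ⟨toFun' f, by
    obtain ⟨K, hK⟩ := exists_lip f
    exact hK.continuous⟩

/-- The compact-open topology `τ₀` on `Lip₀(X, F)`. -/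
def tau0 : TopologicalSpace (lip0 X x₀ F) :=
  TopologicalSpace.induced (toCM X x₀ F) ContinuousMap.compactOpen

/-- The set `γ(U) = ⋃ₙ (U₀ ∩ B + U₁ ∩ 2B + ⋯ + Uₙ ∩ 2ⁿB)` from the definition of the
mixed topology, where `B` is the closed unit ball of `Lip₀(X, F)`. -/
def gammaSet (U : ℕ → Set (lip0 X x₀ F)) : Set (lip0 X x₀ F) :=
  ⋃ n : ℕ, ∑ i ∈ Finset.range (n + 1), (U i ∩ {f | ‖f‖ ≤ 2 ^ i})

/-- The mixed topology `τ_γ = γ[Lip, τ₀]` on `Lip₀(X, F)`: the topology whose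
neighborhoods of a point `f` are generated by the translates by `f` of the sets `γ(U)`,
where `U` runs over all sequences of convex balanced `τ₀`-neighborhoods of zero. -/
def tauGamma : TopologicalSpace (lip0 X x₀ F) :=
  TopologicalSpace.mkOfNhds fun f =>
    ⨅ (U : ℕ → Set (lip0 X x₀ F))
      (_ : ∀ n, U n ∈ @nhds _ (tau0 X x₀ F) 0 ∧ Convex ℝ (U n) ∧ Balanced ℝ (U n)),
      Filter.principal ((f + ·) '' gammaSet X x₀ F U)

/-- A subset of `Lip₀(X, F)` is norm bounded if the Lipschitz norms of its members are
uniformly bounded. -/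
def NormBounded (B : Set (lip0 X x₀ F)) : Prop :=
  ∃ C : ℝ, ∀ f ∈ B, ‖f‖ ≤ C

/-- The locally convex topology `γτ_γ` on `Lip₀(X, F)`, generated by the seminorms
`f ↦ sup_n αₙ ‖f xₙ - f yₙ‖ / d(xₙ, yₙ)` where `(αₙ)` is a sequence of positive reals
tending to zero and `((xₙ, yₙ))` is a sequence of pairs of distinct points of `X`. -/
def gammaTauGamma : TopologicalSpace (lip0 X x₀ F) :=
  ⨅ (α : ℕ → ℝ) (z : ℕ → X × X)
    (_ : (∀ n, 0 < α n) ∧ Filter.Tendsto α Filter.atTop (nhds 0) ∧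
      ∀ n, (z n).1 ≠ (z n).2),
    TopologicalSpace.induced
      (fun f => UniformFun.ofFun fun n =>
        (α n / dist (z n).1 (z n).2) • (toFun' f (z n).1 - toFun' f (z n).2))
      inferInstance

/-- Evaluation at a point of `X`, as a linear functional on `Lip₀(X)`. -/
def evalLM (x : X) : lip0 X x₀ ℝ →ₗ[ℝ] ℝ where
  toFun f := toFun' f x
  map_add' f g := rfl
  map_smul' c f := rfl

/-- Evaluation at a point of `X`, as a continuous linear functional on `Lip₀(X)`. -/
def evalCLM (x : X) : lip0 X x₀ ℝ →L[ℝ] ℝ :=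
  LinearMap.mkContinuous (evalLM X x₀ x) (dist x x₀)
    (fun f => by
      have h0 : toFun' f x₀ = 0 := apply_base f
      have h := norm_sub_le_lipNorm (x₀ := x₀) f x x₀
      rw [h0, sub_zero] at h
      calc ‖evalLM X x₀ x f‖ ≤ lipNorm X x₀ ℝ f * dist x x₀ := h
        _ = dist x x₀ * ‖f‖ := by rw [lip0_norm_def, mul_comm])

/-- The Lipschitz-free space `F(X)`: the closed linear span of the evaluation
functionals inside the dual of `Lip₀(X)`. -/
def freeSpace : Submodule ℝ (lip0 X x₀ ℝ →L[ℝ] ℝ) :=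
  (Submodule.span ℝ (Set.range (evalCLM X x₀))).topologicalClosure

/-- The Dirac map `δ : X → F(X)`. -/
def deltaF (x : X) : freeSpace X x₀ :=
  ⟨evalCLM X x₀ x,
    Submodule.le_topologicalClosure _ (Submodule.subset_span (Set.mem_range_self x))⟩

/-- For a normed space `G`, the topology on the dual `G'` of uniform convergence on the
convex balanced compact subsets of `G` (the topology of `G'_c`). -/
def dualcTop (G : Type*) [NormedAddCommGroup G] [NormedSpace ℝ G] :
    TopologicalSpace (G →L[ℝ] ℝ) :=
  TopologicalSpace.induced
    (fun φ => UniformOnFun.ofFun {L : Set G | IsCompact L ∧ Convex ℝ L ∧ Balanced ℝ L} ⇑φ)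
    inferInstance

/-! If `B` is norm-bounded and `2ⁿ ≥ diam B`, then for `b ∈ B` the set `b + γ(U)` contains
`B ∩ (b + Uₙ)`, so `τ_γ`-open sets are relatively `τ₀`-open on `B`. Conversely, for a
neighbourhood `W` of `0` in `F`, pick neighbourhoods `Vᵢ` of `0` with `V₀ + ⋯ + Vₙ ⊆ W` for
all `n` (by repeated halving) and absolutely convex `τ₀`-neighbourhoods `Uᵢ` with
`T(Uᵢ ∩ 2ⁱ·ball) ⊆ Vᵢ`, using continuity of `T` on the ball of radius `2ⁱ`; then `T(γ(U)) ⊆ W`. -/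

lemma exists_seq_nhds_zero_sum_mem {G : Type*} [AddCommMonoid G] [TopologicalSpace G]
    [ContinuousAdd G] {W : Set G} (hW : W ∈ 𝓝 0) :
    ∃ V : ℕ → Set G, (∀ i, V i ∈ 𝓝 0) ∧
      ∀ n (x : ℕ → G), (∀ i < n, x i ∈ V i) → ∑ i ∈ Finset.range n, x i ∈ W := by
  choose! half half_mem add_mem_of_mem_half using
    fun s (hs : s ∈ 𝓝 (0 : G)) => exists_nhds_zero_half hs
  have chain_mem : ∀ k, half^[k] W ∈ 𝓝 0 := by
    intro k
    induction k with
    | zero => exact hW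
    | succ k ih => rw [Function.iterate_succ_apply']; exact half_mem _ ih
  have sum_mem : ∀ n k (x : ℕ → G), (∀ i < n, x i ∈ half^[k + i + 1] W) →
      ∑ i ∈ Finset.range n, x i ∈ half^[k] W := by
    intro n
    induction n with
    | zero => intro k x _; simpa using mem_of_mem_nhds (chain_mem k)
    | succ n ih =>
      intro k x hx
      rw [Finset.sum_range_succ']
      have htail := ih (k + 1) (fun i => x (i + 1)) fun i hi => by
        have h := hx (i + 1) (by omega)
        rwa [show k + (i + 1) + 1 = k + 1 + i + 1 by omega] at h
      have hhead : x 0 ∈ half^[k + 1] W := hx 0 (by omega)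
      rw [Function.iterate_succ_apply'] at htail hhead
      exact add_mem_of_mem_half _ (chain_mem k) _ htail _ hhead
  exact ⟨fun i => half^[i + 1] W, fun i => chain_mem _,
    fun n x hx => sum_mem n 0 x (by simpa using hx)⟩

section

variable {X : Type*} [MetricSpace X] {x₀ : X} {F : Type*} [NormedAddCommGroup F] [NormedSpace ℝ F]

variable (X x₀ F) in
def toContinuousMapₗ : lip0 X x₀ F →ₗ[ℝ] C(X, F) where
  toFun := toCM X x₀ F
  map_add' _ _ := rfl
  map_smul' _ _ := rfl

lemma tau0_isTopologicalAddGroup : @IsTopologicalAddGroup (lip0 X x₀ F) (tau0 X x₀ F) _ :=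
  topologicalAddGroup_induced (toContinuousMapₗ X x₀ F)

lemma tau0_nhds_zero_hasBasis_absConvex :
    (@nhds _ (tau0 X x₀ F) 0).HasBasis
      (fun s => s ∈ @nhds _ (tau0 X x₀ F) 0 ∧ AbsConvex ℝ s) id := by
  let _ := tau0 X x₀ F
  have : LocallyConvexSpace ℝ (lip0 X x₀ F) :=
    LocallyConvexSpace.induced (toContinuousMapₗ X x₀ F)
  have : ContinuousSMul ℝ (lip0 X x₀ F) := continuousSMul_induced (toContinuousMapₗ X x₀ F)
  exact nhds_hasBasis_absConvex ℝ _

lemma gammaSet_mono {U V : ℕ → Set (lip0 X x₀ F)} (h : ∀ n, U n ⊆ V n) :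
    gammaSet X x₀ F U ⊆ gammaSet X x₀ F V :=
  iUnion_mono fun _ =>
    finsetSum_subset_finsetSum _ _ _ fun i _ => inter_subset_inter_left _ (h i)

lemma inter_closedBall_subset_gammaSet {U : ℕ → Set (lip0 X x₀ F)} (hU : ∀ i, 0 ∈ U i)
    (n : ℕ) : U n ∩ {f | ‖f‖ ≤ 2 ^ n} ⊆ gammaSet X x₀ F U := by
  classical
  intro g hg
  refine mem_iUnion.2 ⟨n, ?_⟩
  have hsum : ∑ i ∈ Finset.range (n + 1), (if i = n then g else 0) = g := by simp
  rw [← hsum]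
  refine finsetSum_mem_finsetSum _ _ _ fun i _ => ?_
  split_ifs with hi
  · exact hi ▸ hg
  · exact ⟨hU i, by simp⟩

lemma isOpen_tauGamma_iff {s : Set (lip0 X x₀ F)} :
    IsOpen[tauGamma X x₀ F] s ↔ ∀ f ∈ s, ∃ U : ℕ → Set (lip0 X x₀ F),
      (∀ n, U n ∈ @nhds _ (tau0 X x₀ F) 0 ∧ Convex ℝ (U n) ∧ Balanced ℝ (U n)) ∧
        (f + ·) '' gammaSet X x₀ F U ⊆ s := by
  refine forall₂_congr fun f _ => (hasBasis_biInf_principal' ?_ ?_).mem_iff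
  · intro U hU V hV
    refine ⟨fun n => U n ∩ V n, fun n => ⟨inter_mem (hU n).1 (hV n).1,
      (hU n).2.1.inter (hV n).2.1, (hU n).2.2.inter (hV n).2.2⟩, ?_, ?_⟩
    · exact image_mono (gammaSet_mono fun n => inter_subset_left)
    · exact image_mono (gammaSet_mono fun n => inter_subset_right)
  · exact ⟨fun _ => univ, fun _ => ⟨univ_mem, convex_univ, balanced_univ⟩⟩

lemma exists_tau0_nhds_forall_norm_sub_le_mem {s : Set (lip0 X x₀ F)}
    (hs : IsOpen[tauGamma X x₀ F] s) {b : lip0 X x₀ F} (hb : b ∈ s) (r : ℝ) :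
    ∃ V ∈ @nhds _ (tau0 X x₀ F) b, ∀ g ∈ V, ‖g - b‖ ≤ r → g ∈ s := by
  obtain ⟨U, hU, hUs⟩ := isOpen_tauGamma_iff.1 hs b hb
  obtain ⟨n, hn⟩ := pow_unbounded_of_one_lt r one_lt_two
  let _ := tau0 X x₀ F
  have := tau0_isTopologicalAddGroup (X := X) (x₀ := x₀) (F := F)
  refine ⟨(· - b) ⁻¹' U n, ?_, fun g hg hgr => ?_⟩
  · exact (continuous_sub_right b).continuousAt.preimage_mem_nhds (by simpa using (hU n).1)
  · have hU0 : ∀ i, (0 : lip0 X x₀ F) ∈ U i := fun i => mem_of_mem_nhds (hU i).1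
    exact hUs ⟨g - b, inter_closedBall_subset_gammaSet hU0 n ⟨hg, hgr.trans hn.le⟩,
      add_sub_cancel _ _⟩

lemma induced_tau0_le_induced_tauGamma {B : Set (lip0 X x₀ F)} (hB : NormBounded X x₀ F B) :
    TopologicalSpace.induced ((↑) : B → lip0 X x₀ F) (tau0 X x₀ F) ≤
      TopologicalSpace.induced ((↑) : B → lip0 X x₀ F) (tauGamma X x₀ F) := by
  obtain ⟨C, hC⟩ := hB
  rintro _ ⟨s, hs, rfl⟩
  let _ := tau0 X x₀ F
  refine isOpen_iff_mem_nhds.2 fun b hb => ?_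
  obtain ⟨V, hV, hVs⟩ := exists_tau0_nhds_forall_norm_sub_le_mem hs hb (2 * C)
  rw [nhds_induced]
  refine mem_comap.2 ⟨V, hV, fun g hg => hVs g hg ?_⟩
  calc ‖(g : lip0 X x₀ F) - b‖ ≤ ‖(g : lip0 X x₀ F)‖ + ‖(b : lip0 X x₀ F)‖ := norm_sub_le _ _
    _ ≤ 2 * C := by linarith [hC g g.2, hC b b.2]

lemma exists_tau0_nhds_zero_of_continuous_restrict {G : Type*} [AddCommMonoid G]
    [TopologicalSpace G] (T : lip0 X x₀ F →+ G) {r : ℝ} (hr : 0 ≤ r)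
    (hT : Continuous[TopologicalSpace.induced ((↑) : {f : lip0 X x₀ F | ‖f‖ ≤ r} → _)
      (tau0 X x₀ F), _] fun g => T g)
    {W : Set G} (hW : W ∈ 𝓝 0) :
    ∃ V ∈ @nhds _ (tau0 X x₀ F) 0, ∀ g ∈ V, ‖g‖ ≤ r → T g ∈ W := by
  let _ := tau0 X x₀ F
  have h0 : (0 : lip0 X x₀ F) ∈ {f | ‖f‖ ≤ r} := by simpa using hr
  have hpre := hT.continuousAt (x := ⟨0, h0⟩) |>.preimage_mem_nhds (by simpa using hW)
  rw [nhds_induced] at hpre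
  obtain ⟨V, hV, hVW⟩ := mem_comap.1 hpre
  exact ⟨V, hV, fun g hg hgr => hVW (a := ⟨g, hgr⟩) hg⟩

theorem continuous_tauGamma_of_forall_closedBall {G : Type*} [AddCommMonoid G]
    [TopologicalSpace G] [ContinuousAdd G] (T : lip0 X x₀ F →+ G)
    (h : ∀ r : ℝ, 0 ≤ r → ∀ W ∈ 𝓝 (0 : G),
      ∃ V ∈ @nhds _ (tau0 X x₀ F) 0, ∀ g ∈ V, ‖g‖ ≤ r → T g ∈ W) :
    Continuous[tauGamma X x₀ F, _] T := by
  refine continuous_def.2 fun W hW => isOpen_tauGamma_iff.2 fun f hf => ?_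
  have hW0 : (T f + ·) ⁻¹' W ∈ 𝓝 (0 : G) :=
    (continuous_const_add (T f)).continuousAt.preimage_mem_nhds (by simpa using hW.mem_nhds hf)
  obtain ⟨V, hV, hsum⟩ := exists_seq_nhds_zero_sum_mem hW0
  have hU : ∀ i : ℕ, ∃ U, (U ∈ @nhds _ (tau0 X x₀ F) 0 ∧ AbsConvex ℝ U) ∧
      ∀ g ∈ U, ‖g‖ ≤ 2 ^ i → T g ∈ V i := by
    intro i
    obtain ⟨U', hU', hU'V⟩ := h (2 ^ i) (by positivity) (V i) (hV i)
    obtain ⟨U, hU, hUU'⟩ := tau0_nhds_zero_hasBasis_absConvex.mem_iff.1 hU'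
    exact ⟨U, hU, fun g hg => hU'V g (hUU' hg)⟩
  choose U hU hUV using hU
  refine ⟨U, fun i => ⟨(hU i).1, (hU i).2.2, (hU i).2.1⟩, ?_⟩
  rintro _ ⟨g, hg, rfl⟩
  obtain ⟨n, hn⟩ := mem_iUnion.1 hg
  obtain ⟨x, hx, rfl⟩ := (mem_finsetSum _ _ _).1 hn
  have hTx : ∀ i < n + 1, T (x i) ∈ V i := fun i hi =>
    hUV i (x i) (hx (Finset.mem_range.2 hi)).1 (hx (Finset.mem_range.2 hi)).2
  simpa [map_sum] using hsum (n + 1) (fun i => T (x i)) hTx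

end

theorem stmt1_general (X : Type*) [MetricSpace X] (x₀ : X)
    (F : Type*) [AddCommGroup F] [Module ℝ F] [TopologicalSpace F]
    [IsTopologicalAddGroup F]
    (T : lip0 X x₀ ℝ →ₗ[ℝ] F) :
    @Continuous _ _ (tauGamma X x₀ ℝ) _ T ↔
      ∀ B : Set (lip0 X x₀ ℝ), NormBounded X x₀ ℝ B →
        @Continuous _ _ (TopologicalSpace.induced ((↑) : B → lip0 X x₀ ℝ) (tau0 X x₀ ℝ)) _
          (fun b : B => T b) := by
  refine ⟨fun hT B hB => ?_, fun h => ?_⟩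
  · have hTB : Continuous[TopologicalSpace.induced ((↑) : B → _) (tauGamma X x₀ ℝ), _]
        fun b : B => T b :=
      @Continuous.comp _ _ _ (_) (tauGamma X x₀ ℝ) _ _ _ hT continuous_induced_dom
    exact continuous_le_dom (induced_tau0_le_induced_tauGamma hB) hTB
  · exact continuous_tauGamma_of_forall_closedBall T.toAddMonoidHom fun r hr W hW =>
      exists_tau0_nhds_zero_of_continuous_restrict T.toAddMonoidHom hr
        (h _ ⟨r, fun _ hf => hf⟩) hW

/-- Let `X` be a pointed metric space, `F` a locally convex space and
`T : Lip₀(X) → F` a linear map. Then `T` is `τ_γ`-continuous iff its restriction to each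
norm-bounded subset `B` of `Lip₀(X)` is continuous for the topology induced by `τ₀`. -/
theorem stmt1 (X : Type*) [MetricSpace X] (x₀ : X)
    (F : Type*) [AddCommGroup F] [Module ℝ F] [TopologicalSpace F]
    [IsTopologicalAddGroup F] [ContinuousSMul ℝ F] [LocallyConvexSpace ℝ F]
    (T : lip0 X x₀ ℝ →ₗ[ℝ] F) :
    @Continuous _ _ (tauGamma X x₀ ℝ) _ T ↔
      ∀ B : Set (lip0 X x₀ ℝ), NormBounded X x₀ ℝ B →
        @Continuous _ _ (TopologicalSpace.induced ((↑) : B → lip0 X x₀ ℝ) (tau0 X x₀ ℝ)) _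
          (fun b : B => T b) :=
  stmt1_general X x₀ F T

end LipApprox
end
end

section
/- Let X be a pointed metric space. A subset of Lip₀(X) is bounded with respect to the topology τ_γ if and only if it is bounded in the Lipschitz norm. -/
/-!
Norm-bounded sets are `τ_γ`-bounded because the norm topology is finer than `τ_γ`: every
`γ(U)` contains `U₀ ∩ B`, and `U₀` is a norm neighbourhood of `0` since evaluation
`(f, x) ↦ f x` is jointly continuous on `Lip₀(X) × X`.

Conversely, if `p` is a seminorm with `p ≤ ε 2⁻ⁱ⁻²` on `Uᵢ ∩ 2ⁱB` for some `τ₀`-neighbourhoods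
`Uᵢ`, then `p < ε` on `γ(U)`, so the `p`-balls are `τ_γ`-open. This applies to
`p f = supₙ αₙ ‖f xₙ - f yₙ‖ / d(xₙ, yₙ)` whenever `αₙ → 0`: on a norm ball only finitely many
terms matter, and those are `τ₀`-continuous. If `B` is not norm bounded, choose `fₙ ∈ B` and
pairs on which the slope of `fₙ` exceeds `(n + 1)²`; with `αₙ = 1 / (n + 1)` the seminorm `p`
is unbounded on `B`, which no `τ_γ`-bounded set allows.
-/

open Filter Topology Set Pointwise

set_option linter.unusedSectionVars false
set_option linter.unusedVariables false

noncomputable section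

namespace LipApprox

variable (X : Type*) [MetricSpace X] (x₀ : X)
variable (F : Type*) [NormedAddCommGroup F] [NormedSpace ℝ F]

variable {X x₀ F}

variable (X x₀ F)

open scoped NNReal

lemma _root_.Seminorm.bddAbove_image_of_isVonNBounded {E : Type*} [AddCommGroup E] [Module ℝ E]
    [TopologicalSpace E] (p : Seminorm ℝ E) (hp : p.ball 0 1 ∈ 𝓝 0) {B : Set E}
    (hB : Bornology.IsVonNBounded ℝ B) : BddAbove (p '' B) := by
  obtain ⟨r, hr, hsub⟩ := (hB hp).exists_pos
  refine ⟨r, ?_⟩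
  rintro _ ⟨f, hf, rfl⟩
  have hfr := hsub r (by rw [Real.norm_of_nonneg hr.le]) hf
  rw [Seminorm.smul_ball_zero hr.ne', mul_one, Real.norm_of_nonneg hr.le,
    Seminorm.mem_ball_zero] at hfr
  exact hfr.le

section

variable {X : Type*} [MetricSpace X] {x₀ : X}
variable {F : Type*} [NormedAddCommGroup F] [NormedSpace ℝ F]

lemma norm_toFun'_le (f : lip0 X x₀ F) (x : X) : ‖toFun' f x‖ ≤ ‖f‖ * dist x x₀ := by
  simpa [apply_base, lip0_norm_def] using norm_sub_le_lipNorm f x x₀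

lemma continuous_toFun'_uncurry : Continuous fun q : lip0 X x₀ F × X => toFun' q.1 q.2 := by
  refine continuous_iff_continuousAt.2 fun ⟨f, x⟩ => ?_
  have hbound : ∀ q : lip0 X x₀ F × X,
      dist (toFun' q.1 q.2) (toFun' f x) ≤ ‖q.1 - f‖ * dist q.2 x₀ + ‖f‖ * dist q.2 x := by
    rintro ⟨g, y⟩
    have hsplit : toFun' g y - toFun' f x = toFun' (g - f) y + (toFun' f y - toFun' f x) := by
      rw [sub_eq_add_neg g, toFun'_add, toFun'_neg]
      simp only [Pi.add_apply, Pi.neg_apply]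
      abel
    rw [dist_eq_norm, hsplit]
    exact (norm_add_le _ _).trans
      (add_le_add (norm_toFun'_le _ _) (norm_sub_le_lipNorm f y x))
  have hcont : Continuous fun q : lip0 X x₀ F × X => ‖q.1 - f‖ * dist q.2 x₀ + ‖f‖ * dist q.2 x := by
    fun_prop
  refine tendsto_iff_dist_tendsto_zero.2 (squeeze_zero (fun _ => dist_nonneg) hbound ?_)
  simpa using hcont.tendsto (f, x)

lemma continuous_toCM : Continuous (toCM X x₀ F) :=
  ContinuousMap.continuous_of_continuous_uncurry _ continuous_toFun'_uncurry

lemma normTopology_le_tau0 : (inferInstance : TopologicalSpace (lip0 X x₀ F)) ≤ tau0 X x₀ F :=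
  continuous_iff_le_induced.1 continuous_toCM

lemma continuous_tau0_toFun' (x : X) :
    Continuous[tau0 X x₀ F, _] fun f : lip0 X x₀ F => toFun' f x :=
  let := tau0 X x₀ F
  (continuous_eval_const x).comp (continuous_induced_dom : Continuous (toCM X x₀ F))

def IsConvexBalancedTau0Nhd (U : Set (lip0 X x₀ F)) : Prop :=
  U ∈ @nhds _ (tau0 X x₀ F) 0 ∧ Convex ℝ U ∧ Balanced ℝ U

lemma gammaSet_mem_nhds {U : ℕ → Set (lip0 X x₀ F)} (hU : ∀ n, IsConvexBalancedTau0Nhd (U n)) :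
    gammaSet X x₀ F U ∈ 𝓝 0 := by
  have hU₀ : U 0 ∩ {f | ‖f‖ ≤ 2 ^ 0} ∈ 𝓝 (0 : lip0 X x₀ F) :=
    Filter.inter_mem (nhds_mono normTopology_le_tau0 (hU 0).1)
      (Filter.mem_of_superset (Metric.closedBall_mem_nhds 0 one_pos) fun f hf => by simpa using hf)
  refine Filter.mem_of_superset hU₀ fun f hf => Set.mem_iUnion.2 ⟨0, ?_⟩
  rwa [Finset.sum_range_one]

lemma normTopology_le_tauGamma : (inferInstance : TopologicalSpace (lip0 X x₀ F)) ≤ tauGamma X x₀ F := by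
  intro s hs
  refine isOpen_iff_mem_nhds.2 fun g hg => ?_
  refine (le_iInf₂ fun U hU => le_principal_iff.2 ?_ : 𝓝 g ≤ _) (hs g hg)
  have h := (vadd_mem_nhds_vadd_iff g).2 (gammaSet_mem_nhds hU)
  rwa [vadd_eq_add, add_zero] at h

lemma seminorm_le_of_mem_finsetSum (p : Seminorm ℝ (lip0 X x₀ F)) {U : ℕ → Set (lip0 X x₀ F)}
    {t : ℕ → ℝ} (hpU : ∀ i, ∀ f ∈ U i, ‖f‖ ≤ 2 ^ i → p f ≤ t i) (s : Finset ℕ) {f : lip0 X x₀ F}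
    (hf : f ∈ ∑ i ∈ s, (U i ∩ {f | ‖f‖ ≤ 2 ^ i})) : p f ≤ ∑ i ∈ s, t i := by
  obtain ⟨g, hg, rfl⟩ := (Set.mem_finsetSum _ _ _).1 hf
  calc p (∑ i ∈ s, g i) ≤ ∑ i ∈ s, p (g i) :=
        Finset.le_sum_of_subadditive p (map_zero p).le (map_add_le_add p) s g
    _ ≤ ∑ i ∈ s, t i := Finset.sum_le_sum fun i hi => hpU i _ (hg hi).1 (hg hi).2

theorem isOpen_tauGamma_ball (p : Seminorm ℝ (lip0 X x₀ F))
    (hp : ∀ R > 0, ∀ t > 0, ∃ U, IsConvexBalancedTau0Nhd U ∧ ∀ f ∈ U, ‖f‖ ≤ R → p f ≤ t)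
    (g : lip0 X x₀ F) (r : ℝ) : IsOpen[tauGamma X x₀ F] (p.ball g r) := by
  intro g' hg'
  set ε := r - p (g' - g)
  have hε : 0 < ε := sub_pos.2 hg'
  choose U hU hpU using fun i : ℕ => hp (2 ^ i) (by positivity) (ε / 4 * (1 / 2) ^ i) (by positivity)
  have hγ : ∀ f ∈ gammaSet X x₀ F U, p f < ε := by
    intro f hf
    obtain ⟨m, hm⟩ := Set.mem_iUnion.1 hf
    calc p f ≤ ∑ i ∈ Finset.range (m + 1), ε / 4 * (1 / 2) ^ i :=
          seminorm_le_of_mem_finsetSum p hpU _ hm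
      _ = ε / 4 * ∑ i ∈ Finset.range (m + 1), (1 / 2 : ℝ) ^ i := (Finset.mul_sum _ _ _).symm
      _ ≤ ε / 4 * 2 := by gcongr; exact sum_geometric_two_le _
      _ < ε := by linarith
  refine Filter.mem_iInf_of_mem U (Filter.mem_iInf_of_mem hU (Filter.mem_principal.2 ?_))
  rintro _ ⟨f, hf, rfl⟩
  rw [Seminorm.mem_ball, add_sub_right_comm]
  calc p (g' - g + f) ≤ p (g' - g) + p f := map_add_le_add p _ _
    _ < r := by linarith [hγ f hf]

@[simps]
def evalSub (x y : X) : lip0 X x₀ F →ₗ[ℝ] F where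
  toFun f := toFun' f x - toFun' f y
  map_add' f g := by simp only [toFun'_add, Pi.add_apply]; abel
  map_smul' c f := by simp only [toFun'_smul, Pi.smul_apply, smul_sub, RingHom.id_apply]

def slopeSeminorm (x y : X) : Seminorm ℝ (lip0 X x₀ F) :=
  (nndist x y)⁻¹ • (normSeminorm ℝ F).comp (evalSub x y)

lemma slopeSeminorm_apply (x y : X) (f : lip0 X x₀ F) :
    slopeSeminorm x y f = ‖toFun' f x - toFun' f y‖ / dist x y := by
  simp [slopeSeminorm, NNReal.smul_def, div_eq_inv_mul]

lemma slopeSeminorm_le_norm (x y : X) (f : lip0 X x₀ F) : slopeSeminorm x y f ≤ ‖f‖ := by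
  simpa [slopeSeminorm_apply, lip0_norm_def] using ratio_le_lipNorm f (x, y)

lemma exists_slope_gt_of_lt_norm {f : lip0 X x₀ F} {C : ℝ} (hC : C < ‖f‖) :
    ∃ p : X × X, C < slopeSeminorm p.1 p.2 f := by
  have : Nonempty (X × X) := ⟨(x₀, x₀)⟩
  simpa [slopeSeminorm_apply] using exists_lt_of_lt_ciSup hC

lemma continuous_tau0_slopeSeminorm (x y : X) :
    Continuous[tau0 X x₀ F, _] (slopeSeminorm (F := F) x y) := by
  let := tau0 X x₀ F
  simp_rw [funext (slopeSeminorm_apply x y)]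
  exact (((continuous_tau0_toFun' x).sub (continuous_tau0_toFun' y)).norm).div_const _

def weightedSlopeSeminorm (w : ℕ → ℝ≥0) (z : ℕ → X × X) : Seminorm ℝ (lip0 X x₀ F) :=
  ⨆ n, w n • slopeSeminorm (z n).1 (z n).2

section Weighted

variable {w : ℕ → ℝ≥0} (z : ℕ → X × X)

lemma bddAbove_range_weighted_slopeSeminorm (hw : BddAbove (Set.range w)) :
    BddAbove (Set.range fun n =>
      (w n • slopeSeminorm (z n).1 (z n).2 : Seminorm ℝ (lip0 X x₀ F))) := by
  obtain ⟨C, hC⟩ := hw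
  refine Seminorm.bddAbove_range_iff.2 fun f => ⟨C * ‖f‖, ?_⟩
  rintro _ ⟨n, rfl⟩
  exact mul_le_mul (hC ⟨n, rfl⟩) (slopeSeminorm_le_norm _ _ f) (by positivity) C.2

lemma le_weightedSlopeSeminorm (hw : BddAbove (Set.range w)) (n : ℕ) (f : lip0 X x₀ F) :
    w n * slopeSeminorm (z n).1 (z n).2 f ≤ weightedSlopeSeminorm w z f :=
  le_ciSup (bddAbove_range_weighted_slopeSeminorm z hw) n f

lemma weightedSlopeSeminorm_le (hw : BddAbove (Set.range w)) {f : lip0 X x₀ F} {t : ℝ}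
    (h : ∀ n, w n * slopeSeminorm (z n).1 (z n).2 f ≤ t) : weightedSlopeSeminorm w z f ≤ t := by
  rw [weightedSlopeSeminorm, Seminorm.coe_iSup_eq (bddAbove_range_weighted_slopeSeminorm z hw), iSup_apply]
  exact ciSup_le h

theorem isOpen_tauGamma_weightedSlopeSeminorm_ball (hw : Tendsto w atTop (𝓝 0))
    (g : lip0 X x₀ F) (r : ℝ) : IsOpen[tauGamma X x₀ F] ((weightedSlopeSeminorm w z).ball g r) := by
  refine isOpen_tauGamma_ball _ (fun R hR t ht => ?_) g r
  obtain ⟨N, hN⟩ := eventually_atTop.1 <|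
    (NNReal.tendsto_coe.2 hw).eventually (gt_mem_nhds (div_pos ht hR))
  set q : ℕ → Seminorm ℝ (lip0 X x₀ F) := fun n => w n • slopeSeminorm (z n).1 (z n).2
  refine ⟨((Finset.range N).sup q).ball 0 t, ⟨?_, Seminorm.convex_ball _ _ _,
    Seminorm.balanced_ball_zero _ _⟩, fun f hf hfR => ?_⟩
  · rw [Seminorm.ball_finset_sup_eq_iInter _ _ _ ht]
    refine (Filter.biInter_finset_mem _).2 fun n _ => ?_
    let := tau0 X x₀ F
    rw [Seminorm.ball_zero_eq]
    exact (continuous_const.mul (continuous_tau0_slopeSeminorm _ _)).continuousAt.preimage_mem_nhds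
      (Iio_mem_nhds (by simpa using ht))
  · refine weightedSlopeSeminorm_le z hw.bddAbove_range fun n => ?_
    rcases lt_or_ge n N with hn | hn
    · exact (Seminorm.le_finset_sup_apply (p := q) (Finset.mem_range.2 hn)).trans
        ((Seminorm.mem_ball_zero _).1 hf).le
    · calc (w n : ℝ) * slopeSeminorm (z n).1 (z n).2 f ≤ t / R * R :=
            mul_le_mul (hN n hn).le ((slopeSeminorm_le_norm _ _ f).trans hfR) (by positivity)
              (by positivity)
        _ = t := div_mul_cancel₀ t hR.ne'

end Weighted

lemma exists_weightedSlopeSeminorm_not_bddAbove {B : Set (lip0 X x₀ F)}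
    (hB : ¬NormBounded X x₀ F B) : ∃ (w : ℕ → ℝ≥0) (z : ℕ → X × X),
      Tendsto w atTop (𝓝 0) ∧ ¬BddAbove (weightedSlopeSeminorm w z '' B) := by
  simp only [NormBounded, not_exists, not_forall, not_le, exists_prop] at hB
  choose f hfB hf using fun k : ℕ => hB (((k : ℝ) + 1) ^ 2)
  choose z hz using fun k => exists_slope_gt_of_lt_norm (hf k)
  set w : ℕ → ℝ≥0 := fun k => 1 / ((k : ℝ≥0) + 1)
  have hw : Tendsto w atTop (𝓝 0) := tendsto_one_div_add_atTop_nhds_zero_nat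
  refine ⟨w, z, hw, fun ⟨C, hC⟩ => ?_⟩
  obtain ⟨k, hk⟩ := exists_nat_gt C
  have hlarge : (k : ℝ) + 1 < w k * slopeSeminorm (z k).1 (z k).2 (f k) := by
    rw [show ((w k : ℝ≥0) : ℝ) = ((k : ℝ) + 1)⁻¹ by simp [w], lt_inv_mul_iff₀ (by positivity),
      ← sq]
    exact hz k
  linarith [(le_weightedSlopeSeminorm z hw.bddAbove_range k (f k)).trans (hC ⟨f k, hfB k, rfl⟩)]

end

/-- A subset of `Lip₀(X)` is (von Neumann) bounded with respect to the
topology `τ_γ` iff it is bounded in the Lipschitz norm. -/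
theorem stmt3 (X : Type*) [MetricSpace X] (x₀ : X) (B : Set (lip0 X x₀ ℝ)) :
    @Bornology.IsVonNBounded ℝ _ _ _ _ (tauGamma X x₀ ℝ) B ↔ NormBounded X x₀ ℝ B := by
  let := tauGamma X x₀ ℝ
  constructor
  · intro hB
    by_contra hunb
    obtain ⟨w, z, hw, hp⟩ := exists_weightedSlopeSeminorm_not_bddAbove hunb
    exact hp <| (weightedSlopeSeminorm w z).bddAbove_image_of_isVonNBounded
      ((isOpen_tauGamma_weightedSlopeSeminorm_ball z hw 0 1).mem_nhds (by simp)) hB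
  · rintro ⟨C, hC⟩
    refine Bornology.IsVonNBounded.of_topologicalSpace_le normTopology_le_tauGamma ?_
    exact (NormedSpace.isVonNBounded_iff ℝ).2 (isBounded_iff_forall_norm_le.2 ⟨C, hC⟩)

end LipApprox
end
end
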